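/- Let n ≥ 1, 2 ≤ p < ∞ and let N > n be real. There is a constant C > 0 such that for all j, j' ∈ ℤ with j ≤ j' + 1, all k ∈ ℤ^n, and all families (u^{ε'}_{k'})_{ε'∈E_n, k'∈ℤ^n} and (v^{ε''}_{k''})_{ε''∈E_n, k''∈ℤ^n} of nonnegative real numbers: Σ_{ε'∈E_n} Σ_{k'∈ℤ^n} Σ_{ε''∈E_n} Σ_{k''∈ℤ^n} u^{ε'}_{k'} v^{ε''}_{k''} (1+|2^{j−j'}k'−k|)^{−8N} (1+|k'−k''|)^{−8N} ≤ C Σ_{w∈ℤ^n} Σ_{w'∈ℤ^n} (1+|w|)^{−N} (1+|w−w'|)^{−N} 2^{n(j'−j)(1−2/p)} ( Σ_{ε'∈E_n} Σ_{k' : Q_{j',k'} ⊆ Q^w_{j,k}} (u^{ε'}_{k'})^p )^{1/p} ( Σ_{ε''∈E_n} Σ_{k'' : Q_{j',k''} ⊆ Q^{w'}_{j,k}} (v^{ε''}_{k''})^p )^{1/p}, both sides interpreted in [0,∞]. -/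

import Mathlib

noncomputable section

open MeasureTheory Real Complex
open scoped ENNReal NNReal

/-- `ℝⁿ` modeled as functions `Fin n → ℝ`. -/
abbrev Vec (n : ℕ) : Type := Fin n → ℝ

/-- Integer lattice `ℤⁿ`. -/
abbrev IVec (n : ℕ) : Type := Fin n → ℤ

/-- The index set `E_n = {0,1}ⁿ \ {0}`, with `{0,1}ⁿ` modeled as `Fin n → Bool`. -/
abbrev En (n : ℕ) : Type := {ε : Fin n → Bool // ε ≠ fun _ => false}

/-- The Euclidean norm on `Vec n`. -/
def enorm2 {n : ℕ} (x : Vec n) : ℝ := Real.sqrt (∑ i, (x i) ^ 2)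

/-- The dyadic cube `Q_{j,k} = {x : 2^j x − k ∈ [0,1)ⁿ}` of side length `2^{−j}`. -/
def dyadicCube (n : ℕ) (j : ℤ) (k : IVec n) : Set (Vec n) :=
  {x | ∀ i, (k i : ℝ) ≤ (2:ℝ) ^ j * x i ∧ (2:ℝ) ^ j * x i < (k i : ℝ) + 1}

/-- `Q^w_{j,k} = 2^{8−j} w + tilde-Q_{j,k}`, where `tilde-Q_{j,k}` is the unique dyadic
cube of side length `2^{8−j}` containing `Q_{j,k}` (its index is `⌊k/2^8⌋`). -/
def QW (n : ℕ) (j : ℤ) (k w : IVec n) : Set (Vec n) :=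
  dyadicCube n (j - 8) (fun i => Int.fdiv (k i) 256 + w i)

/-!
Sort `k'` and `k''` into the blocks `{k' : Q_{j',k'} ⊆ Q^w_{j,k}}`. For `k'` in block `w`, the
point `2^{j-j'} k' - k` lies within `ℓ^∞`-distance `2^8` of `2^8 w`; for `k'` in block `w` and
`k''` in block `w'`, `k' - k''` lies within `ℓ^∞`-distance `2^{j'-j+8}` of `2^{j'-j+8} (w - w')`.
Hence `(1+|2^{j-j'}k'-k|)^{-8N} (1+|k'-k''|)^{-8N}` is at most a constant times
`(1+|w|)^{-N} (1+|w-w'|)^{-N} (1+|k'-k''|)^{-4N}`. The kernel `(1+|k'-k''|)^{-4N}` has row and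
column sums bounded uniformly (as `4N ≥ 2n`), so by the Schur test the sum over a pair of blocks
is bounded by the `ℓ²` norms of `u` and `v` on the blocks; a block has `2^{n(j'-j+8)}` elements,
so Hölder turns each `ℓ²` norm into the `ℓ^p` norm times `2^{n(j'-j)(1/2-1/p)}` up to a constant.
-/

namespace ENNReal

variable {ι κ : Type*}

theorem inner_le_Lp_mul_Lq_tsum (f g : ι → ℝ≥0∞) {p q : ℝ} (hpq : p.HolderConjugate q) :
    ∑' i, f i * g i ≤ (∑' i, f i ^ p) ^ (1 / p) * (∑' i, g i ^ q) ^ (1 / q) := by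
  let _ : MeasurableSpace ι := ⊤
  have : MeasurableSingletonClass ι := ⟨fun _ => trivial⟩
  simpa only [lintegral_count, Pi.mul_apply] using
    lintegral_mul_le_Lp_mul_Lq (Measure.count : Measure ι) hpq
      measurable_from_top.aemeasurable measurable_from_top.aemeasurable

theorem tsum_rpow_two_rpow_le (f : ι → ℝ≥0∞) {p : ℝ} (hp : 2 ≤ p) :
    (∑' i, f i ^ (2 : ℝ)) ^ (1 / 2 : ℝ) ≤
      (∑' i, f i ^ p) ^ (1 / p) * (∑' _ : ι, (1 : ℝ≥0∞)) ^ (1 / 2 - 1 / p) := by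
  obtain rfl | hp := hp.eq_or_lt
  · norm_num
  have hconj := Real.HolderConjugate.conjExponent (show 1 < p / 2 by linarith)
  have hholder := inner_le_Lp_mul_Lq_tsum (fun i => f i ^ (2 : ℝ)) (fun _ => 1) hconj
  simp only [mul_one, one_rpow, ← rpow_mul] at hholder
  calc (∑' i, f i ^ (2 : ℝ)) ^ (1 / 2 : ℝ)
      ≤ ((∑' i, f i ^ (2 * (p / 2))) ^ (1 / (p / 2)) *
          (∑' _ : ι, (1 : ℝ≥0∞)) ^ (1 / (p / 2).conjExponent)) ^ (1 / 2 : ℝ) := by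
        gcongr
    _ = (∑' i, f i ^ p) ^ (1 / p) * (∑' _ : ι, (1 : ℝ≥0∞)) ^ (1 / 2 - 1 / p) := by
        have hp0 : p ≠ 0 := by positivity
        rw [mul_rpow_of_nonneg _ _ (by norm_num), ← rpow_mul, ← rpow_mul,
          show 2 * (p / 2) = p by ring, show 1 / (p / 2) * (1 / 2) = 1 / p by field_simp,
          show 1 / (p / 2).conjExponent * (1 / 2) = 1 / 2 - 1 / p by
            rw [Real.conjExponent]; field_simp]

theorem tsum_tsum_mul_le_of_schur (K : ι → κ → ℝ≥0∞) {R : ℝ≥0∞}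
    (hrow : ∀ a, ∑' b, K a b ≤ R) (hcol : ∀ b, ∑' a, K a b ≤ R)
    (f : ι → ℝ≥0∞) (g : κ → ℝ≥0∞) :
    ∑' a, ∑' b, f a * g b * K a b ≤
      R * ((∑' a, f a ^ (2 : ℝ)) ^ (1 / 2 : ℝ) *
        (∑' b, g b ^ (2 : ℝ)) ^ (1 / 2 : ℝ)) := by
  have sq_mul_sqrt : ∀ x y : ℝ≥0∞,
      (x * y ^ (1 / 2 : ℝ)) ^ (2 : ℝ) = x ^ (2 : ℝ) * y := by
    intro x y
    rw [mul_rpow_of_nonneg _ _ zero_le_two, ← rpow_mul]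
    norm_num
  have hf : ∑' q : ι × κ, (f q.1 * K q.1 q.2 ^ (1 / 2 : ℝ)) ^ (2 : ℝ) ≤
      R * ∑' a, f a ^ (2 : ℝ) := by
    simp only [sq_mul_sqrt, ENNReal.tsum_prod', ENNReal.tsum_mul_left]
    rw [← ENNReal.tsum_mul_left]
    refine ENNReal.tsum_le_tsum fun a => ?_
    rw [mul_comm]
    gcongr
    exact hrow a
  have hg : ∑' q : ι × κ, (g q.2 * K q.1 q.2 ^ (1 / 2 : ℝ)) ^ (2 : ℝ) ≤
      R * ∑' b, g b ^ (2 : ℝ) := by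
    simp only [sq_mul_sqrt, ENNReal.tsum_prod']
    rw [ENNReal.tsum_comm, ← ENNReal.tsum_mul_left]
    refine ENNReal.tsum_le_tsum fun b => ?_
    rw [ENNReal.tsum_mul_left, mul_comm]
    gcongr
    exact hcol b
  calc ∑' a, ∑' b, f a * g b * K a b
      = ∑' q : ι × κ,
          (f q.1 * K q.1 q.2 ^ (1 / 2 : ℝ)) * (g q.2 * K q.1 q.2 ^ (1 / 2 : ℝ)) := by
        rw [ENNReal.tsum_prod']
        refine tsum_congr fun a => tsum_congr fun b => ?_
        rw [mul_mul_mul_comm, ← rpow_add_of_nonneg _ _ (by norm_num) (by norm_num)]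
        norm_num
    _ ≤ (R * ∑' a, f a ^ (2 : ℝ)) ^ (1 / 2 : ℝ) *
          (R * ∑' b, g b ^ (2 : ℝ)) ^ (1 / 2 : ℝ) :=
        (inner_le_Lp_mul_Lq_tsum _ _ .two_two).trans (by gcongr)
    _ = R * ((∑' a, f a ^ (2 : ℝ)) ^ (1 / 2 : ℝ) *
          (∑' b, g b ^ (2 : ℝ)) ^ (1 / 2 : ℝ)) := by
        rw [mul_rpow_of_nonneg _ _ (by norm_num), mul_rpow_of_nonneg _ _ (by norm_num),
          mul_mul_mul_comm, ← rpow_add_of_nonneg _ _ (by norm_num) (by norm_num)]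
        norm_num

theorem tsum_tsum_mul_le_of_schur_of_card (K : ι → κ → ℝ≥0∞) {R M : ℝ≥0∞} {p : ℝ}
    (hp : 2 ≤ p)
    (hrow : ∀ a, ∑' b, K a b ≤ R) (hcol : ∀ b, ∑' a, K a b ≤ R)
    (hι : ∑' _ : ι, (1 : ℝ≥0∞) ≤ M) (hκ : ∑' _ : κ, (1 : ℝ≥0∞) ≤ M)
    (f : ι → ℝ≥0∞) (g : κ → ℝ≥0∞) :
    ∑' a, ∑' b, f a * g b * K a b ≤
      R * M ^ (1 - 2 / p) * ((∑' a, f a ^ p) ^ (1 / p) * (∑' b, g b ^ p) ^ (1 / p)) := by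
  have hθ : 0 ≤ 1 / 2 - 1 / p := by
    rw [sub_nonneg]; gcongr
  calc ∑' a, ∑' b, f a * g b * K a b
      ≤ R * ((∑' a, f a ^ p) ^ (1 / p) * M ^ (1 / 2 - 1 / p) *
          ((∑' b, g b ^ p) ^ (1 / p) * M ^ (1 / 2 - 1 / p))) := by
        refine (tsum_tsum_mul_le_of_schur K hrow hcol f g).trans ?_
        gcongr
        · exact (tsum_rpow_two_rpow_le f hp).trans (by gcongr)
        · exact (tsum_rpow_two_rpow_le g hp).trans (by gcongr)
    _ = R * M ^ (1 - 2 / p) * ((∑' a, f a ^ p) ^ (1 / p) * (∑' b, g b ^ p) ^ (1 / p)) := by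
        rw [mul_mul_mul_comm, ← rpow_add_of_nonneg _ _ hθ hθ]
        ring_nf

theorem tsum_pi_prod_eq_pow {α : Type*} (g : α → ℝ≥0∞) :
    ∀ n : ℕ, ∑' m : Fin n → α, ∏ i, g (m i) = (∑' a, g a) ^ n
  | 0 => by simp
  | n + 1 => by
    rw [← (Fin.consEquiv fun _ => α).tsum_eq, ENNReal.tsum_prod', pow_succ',
      ← tsum_pi_prod_eq_pow g n, ← ENNReal.tsum_mul_right]
    refine tsum_congr fun a => ?_
    rw [← ENNReal.tsum_mul_left]
    refine tsum_congr fun m => ?_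
    simp [Fin.consEquiv, Fin.prod_univ_succ]

theorem tsum_fintype_prod_snd {E β : Type*} [Fintype E] (f : β → ℝ≥0∞) :
    ∑' b : E × β, f b.2 = Fintype.card E * ∑' x, f x := by
  simp [ENNReal.tsum_prod', tsum_fintype]

end ENNReal

section Decay

variable {n : ℕ}

theorem enorm2_eq_norm (x : Vec n) : enorm2 x = ‖WithLp.toLp 2 x‖ := by
  simp [EuclideanSpace.norm_eq, enorm2]

theorem enorm2_nonneg (x : Vec n) : 0 ≤ enorm2 x := Real.sqrt_nonneg _

theorem abs_le_enorm2 (x : Vec n) (i : Fin n) : |x i| ≤ enorm2 x := by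
  simpa [enorm2_eq_norm] using PiLp.norm_apply_le (WithLp.toLp 2 x) i

theorem enorm2_le_sqrt_mul {x : Vec n} {T : ℝ} (hT : 0 ≤ T) (h : ∀ i, |x i| ≤ T) :
    enorm2 x ≤ √n * T := by
  calc enorm2 x ≤ √(∑ _i : Fin n, T ^ 2) :=
        Real.sqrt_le_sqrt <| Finset.sum_le_sum fun i _ =>
          sq_le_sq' (abs_le.1 (h i)).1 (abs_le.1 (h i)).2
    _ = √n * T := by simp [Real.sqrt_sq hT]

theorem enorm2_sub_comm (x y : Vec n) :
    enorm2 (fun i => x i - y i) = enorm2 (fun i => y i - x i) := by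
  simp only [enorm2, ← neg_sub (y _), neg_sq]

theorem one_add_enorm2_le {x w : Vec n} {T : ℝ} (hT : 1 ≤ T)
    (h : ∀ i, |x i - T * w i| ≤ T) :
    1 + enorm2 w ≤ (1 + √n) * (1 + enorm2 x) := by
  have hclose : enorm2 (fun i => T * w i - x i) ≤ √n * T :=
    enorm2_le_sqrt_mul (by linarith) fun i => by rw [abs_sub_comm]; exact h i
  have htri : T * enorm2 w ≤ enorm2 x + √n * T := by
    simp only [enorm2_eq_norm] at hclose ⊢
    calc T * ‖WithLp.toLp 2 w‖
        = ‖WithLp.toLp 2 x + (T • WithLp.toLp 2 w - WithLp.toLp 2 x)‖ := by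
          rw [add_sub_cancel, norm_smul, Real.norm_of_nonneg (by linarith)]
      _ ≤ _ := (norm_add_le _ _).trans (by gcongr; exact hclose)
  have hx := enorm2_nonneg x
  have hw : enorm2 w ≤ enorm2 x + √n :=
    le_of_mul_le_mul_left (by nlinarith) (by linarith : 0 < T)
  nlinarith [mul_nonneg (Real.sqrt_nonneg n) hx]

def decay (s : ℝ) (x : Vec n) : ℝ≥0∞ := ENNReal.ofReal ((1 + enorm2 x) ^ (-s))

theorem one_le_one_add_enorm2 (x : Vec n) : 1 ≤ 1 + enorm2 x := by
  linarith [enorm2_nonneg x]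

theorem decay_anti {s t : ℝ} (hst : s ≤ t) (x : Vec n) : decay t x ≤ decay s x :=
  ENNReal.ofReal_le_ofReal <|
    Real.rpow_le_rpow_of_exponent_le (one_le_one_add_enorm2 x) (neg_le_neg hst)

theorem decay_add (s t : ℝ) (x : Vec n) : decay (s + t) x = decay s x * decay t x := by
  rw [decay, decay, decay, ← ENNReal.ofReal_mul (by positivity [enorm2_nonneg x]), neg_add,
    Real.rpow_add (by linarith [enorm2_nonneg x])]

theorem decay_le_of_le_mul {s c : ℝ} (hs : 0 ≤ s) {x y : Vec n}
    (h : 1 + enorm2 y ≤ c * (1 + enorm2 x)) :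
    decay s x ≤ ENNReal.ofReal (c ^ s) * decay s y := by
  have hx := one_le_one_add_enorm2 x
  have hy := one_le_one_add_enorm2 y
  have hc : 0 < c := by
    by_contra! hc
    nlinarith
  rw [decay, decay, ← ENNReal.ofReal_mul (by positivity)]
  refine ENNReal.ofReal_le_ofReal ?_
  rw [Real.rpow_neg (by linarith), Real.rpow_neg (by linarith), ← div_eq_mul_inv, inv_eq_one_div,
    div_le_div_iff₀ (by positivity) (by positivity), one_mul,
    ← Real.mul_rpow hc.le (by linarith)]
  gcongr

theorem decay_sub_comm (s : ℝ) (x y : Vec n) :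
    decay s (fun i => x i - y i) = decay s (fun i => y i - x i) := by
  rw [decay, decay, enorm2_sub_comm]

theorem tsum_decay_sub_eq (s : ℝ) (y : IVec n) :
    ∑' m : IVec n, decay s (fun i => (y i : ℝ) - m i) =
      ∑' m : IVec n, decay s (fun i => (m i : ℝ)) :=
  calc _ = ∑' m, (fun m : IVec n => decay s fun i => (m i : ℝ)) (Equiv.subLeft y m) :=
        tsum_congr fun m => by simp [Equiv.subLeft]
    _ = _ := (Equiv.subLeft y).tsum_eq (fun m : IVec n => decay s fun i => (m i : ℝ))

theorem tsum_decay_ne_top {s : ℝ} (hs : 2 * n ≤ s) :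
    ∑' m : IVec n, decay s (fun i => (m i : ℝ)) ≠ ∞ := by
  have hsum : Summable fun t : ℤ => (1 + |(t : ℝ)|) ^ (-2 : ℝ) := by
    refine ((Real.summable_one_div_int_add_rpow (1 / 2) 2).2 one_lt_two).of_nonneg_of_le
      (fun _ => by positivity) fun t => ?_
    rw [Real.rpow_neg (by positivity), ← one_div]
    -- the shift by `1/2` is needed: `1 / |t| ^ 2` is `0`, not `∞`, at `t = 0`
    have ht : (t : ℝ) + 1 / 2 ≠ 0 := fun h => by
      have : 2 * t + 1 = 0 := by exact_mod_cast (by linarith : 2 * (t : ℝ) + 1 = 0)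
      omega
    gcongr
    exact (abs_add_le _ _).trans (by norm_num; linarith [abs_nonneg (t : ℝ)])
  refine ne_top_of_le_ne_top
    (b := (∑' t : ℤ, ENNReal.ofReal ((1 + |(t : ℝ)|) ^ (-2 : ℝ))) ^ n) ?_ ?_
  · rw [← ENNReal.ofReal_tsum_of_nonneg (fun _ => by positivity) hsum]
    exact ENNReal.pow_ne_top ENNReal.ofReal_ne_top
  rw [← ENNReal.tsum_pi_prod_eq_pow]
  refine ENNReal.tsum_le_tsum fun m => ?_
  rw [← ENNReal.ofReal_prod_of_nonneg (fun _ _ => by positivity), decay]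
  refine ENNReal.ofReal_le_ofReal ?_
  have hm := one_le_one_add_enorm2 fun i => (m i : ℝ)
  calc (1 + enorm2 fun i => (m i : ℝ)) ^ (-s)
      ≤ (1 + enorm2 fun i => (m i : ℝ)) ^ (-2 * n : ℝ) :=
        Real.rpow_le_rpow_of_exponent_le hm (by linarith)
    _ = ∏ _i : Fin n, (1 + enorm2 fun i => (m i : ℝ)) ^ (-2 : ℝ) := by
        rw [Finset.prod_const, Finset.card_univ, Fintype.card_fin, ← Real.rpow_natCast,
          ← Real.rpow_mul (by linarith)]
    _ ≤ ∏ i, (1 + |(m i : ℝ)|) ^ (-2 : ℝ) :=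
        Finset.prod_le_prod (fun _ _ => by positivity) fun i _ =>
          Real.rpow_le_rpow_of_nonpos (by positivity)
            (by linarith [abs_le_enorm2 (fun i => (m i : ℝ)) i]) (by norm_num)

end Decay

section Dyadic

variable {n : ℕ}

theorem mem_dyadicCube_iff {J : ℤ} {m : IVec n} {x : Vec n} :
    x ∈ dyadicCube n J m ↔ ∀ i, ⌊(2 : ℝ) ^ J * x i⌋ = m i := by
  simp only [dyadicCube, Set.mem_ofPred_eq, Int.floor_eq_iff]

theorem corner_mem_dyadicCube (J : ℤ) (m : IVec n) :
    (fun i => (2 : ℝ) ^ (-J) * m i) ∈ dyadicCube n J m := fun i => by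
  simp [← mul_assoc, mul_inv_cancel₀ (zpow_ne_zero J (two_ne_zero' ℝ))]

theorem floor_mul_eq_ediv_of_mem_dyadicCube {J J' : ℤ} (hJ : J ≤ J') {k' : IVec n} {x : Vec n}
    (hx : x ∈ dyadicCube n J' k') (i : Fin n) :
    ⌊(2 : ℝ) ^ J * x i⌋ = k' i / 2 ^ (J' - J).toNat := by
  have hpow : (((2 ^ (J' - J).toNat : ℕ) : ℝ)) = 2 ^ (J' - J) := by
    rw [Nat.cast_pow, Nat.cast_two, ← zpow_natCast, Int.toNat_of_nonneg (by omega)]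
  have hscale : (2 : ℝ) ^ J * x i = 2 ^ J' * x i / ((2 ^ (J' - J).toNat : ℕ) : ℝ) := by
    rw [hpow, eq_div_iff (by positivity), mul_right_comm, ← zpow_add₀ (two_ne_zero' ℝ),
      add_sub_cancel]
  rw [hscale, Int.floor_div_natCast, mem_dyadicCube_iff.1 hx i]
  push_cast
  rfl

theorem dyadicCube_subset_dyadicCube_iff {J J' : ℤ} (hJ : J ≤ J') {k' m : IVec n} :
    dyadicCube n J' k' ⊆ dyadicCube n J m ↔ ∀ i, k' i / 2 ^ (J' - J).toNat = m i := by
  constructor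
  · intro h i
    rw [← floor_mul_eq_ediv_of_mem_dyadicCube hJ (corner_mem_dyadicCube J' k')]
    exact mem_dyadicCube_iff.1 (h (corner_mem_dyadicCube J' k')) i
  · intro h x hx
    exact mem_dyadicCube_iff.2 fun i => by rw [floor_mul_eq_ediv_of_mem_dyadicCube hJ hx, h]

theorem le_and_lt_of_dyadicCube_subset {J J' : ℤ} {k' m : IVec n}
    (h : dyadicCube n J' k' ⊆ dyadicCube n J m) (i : Fin n) {c : ℝ} (hc : 0 < c) :
    c * m i ≤ c * 2 ^ (J - J') * k' i ∧ c * 2 ^ (J - J') * k' i < c * m i + c := by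
  obtain ⟨hle, hlt⟩ := h (corner_mem_dyadicCube J' k') i
  rw [← mul_assoc, ← zpow_add₀ (two_ne_zero' ℝ), ← sub_eq_add_neg] at hle hlt
  constructor
  · rw [mul_assoc]; gcongr
  · nlinarith

theorem abs_sub_sub_mul_sub_le {x y T a b : ℝ} (hx : T * a ≤ x ∧ x < T * a + T)
    (hy : T * b ≤ y ∧ y < T * b + T) : |x - y - T * (a - b)| ≤ T := by
  rw [abs_le]
  constructor <;> linarith [hx.1, hx.2, hy.1, hy.2]

abbrev Subcubes (n : ℕ) (j j' : ℤ) (k w : IVec n) : Type :=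
  {k' : IVec n // dyadicCube n j' k' ⊆ QW n j k w}

variable {j j' : ℤ} {k k' k'' w w' : IVec n}

theorem subset_QW_iff (hj : j - 8 ≤ j') :
    dyadicCube n j' k' ⊆ QW n j k w ↔
      ∀ i, k' i / 2 ^ (j' - (j - 8)).toNat = k i / 256 + w i := by
  simp [QW, dyadicCube_subset_dyadicCube_iff hj, Int.fdiv_eq_ediv]

theorem one_add_enorm2_le_of_subset_QW (hk' : dyadicCube n j' k' ⊆ QW n j k w) :
    1 + enorm2 (fun i => (w i : ℝ)) ≤
      (1 + √n) * (1 + enorm2 (fun i => (2 : ℝ) ^ (j - j') * k' i - k i)) := by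
  refine one_add_enorm2_le (T := 256) (by norm_num) fun i => ?_
  have hx := le_and_lt_of_dyadicCube_subset hk' i (c := 256) (by norm_num)
  rw [show (256 : ℝ) * 2 ^ (j - 8 - j') = 2 ^ (j - j') by
    rw [show j - j' = 8 + (j - 8 - j') by ring, zpow_add₀ two_ne_zero]; norm_num] at hx
  have hy : (256 : ℝ) * (k i / 256 : ℤ) ≤ k i ∧
      (k i : ℝ) < 256 * (k i / 256 : ℤ) + 256 := by
    constructor <;> norm_cast <;> omega
  push_cast at hx
  simpa [Int.fdiv_eq_ediv] using abs_sub_sub_mul_sub_le hx hy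

theorem one_add_enorm2_sub_le_of_subset_QW (hj : j - 8 ≤ j')
    (hk' : dyadicCube n j' k' ⊆ QW n j k w) (hk'' : dyadicCube n j' k'' ⊆ QW n j k w') :
    1 + enorm2 (fun i => (w i : ℝ) - w' i) ≤
      (1 + √n) * (1 + enorm2 (fun i => (k' i : ℝ) - k'' i)) := by
  have hT : (1 : ℝ) ≤ 2 ^ (j' - (j - 8)) := one_le_zpow₀ one_le_two (by omega)
  refine one_add_enorm2_le hT fun i => ?_
  have hunit : (2 : ℝ) ^ (j' - (j - 8)) * 2 ^ (j - 8 - j') = 1 := by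
    rw [← zpow_add₀ two_ne_zero]; simp
  have hx := le_and_lt_of_dyadicCube_subset hk' i (by positivity : (0 : ℝ) < 2 ^ (j' - (j - 8)))
  have hy := le_and_lt_of_dyadicCube_subset hk'' i (by positivity : (0 : ℝ) < 2 ^ (j' - (j - 8)))
  rw [hunit, one_mul] at hx hy
  simpa using abs_sub_sub_mul_sub_le hx hy

end Dyadic

section Subcubes

variable {n : ℕ} {j j' : ℤ}

theorem tsum_eq_tsum_tsum_subcubes (hj : j - 8 ≤ j') (k : IVec n) (G : IVec n → ℝ≥0∞) :
    ∑' k', G k' = ∑' w, ∑' k' : Subcubes n j j' k w, G k' := by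
  let parent : IVec n → IVec n := fun k' i => k' i / 2 ^ (j' - (j - 8)).toNat - k i / 256
  have hparent : ∀ w k', parent k' = w ↔ dyadicCube n j' k' ⊆ QW n j k w := fun w k' => by
    rw [subset_QW_iff hj, funext_iff]
    exact forall_congr' fun i => sub_eq_iff_eq_add'
  rw [← (Equiv.sigmaFiberEquiv parent).tsum_eq, ENNReal.tsum_sigma']
  exact tsum_congr fun w =>
    (Equiv.subtypeEquivRight (hparent w)).tsum_eq fun k' : Subcubes n j j' k w => G k'

theorem tsum_tsum_eq_tsum_subcubes {E : Type*} (hj : j - 8 ≤ j') (k : IVec n)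
    (G : E → IVec n → ℝ≥0∞) :
    ∑' (ε : E) (k' : IVec n), G ε k' =
      ∑' (w : IVec n) (ε : E) (k' : Subcubes n j j' k w), G ε k' := by
  rw [tsum_congr fun ε => tsum_eq_tsum_tsum_subcubes hj k (G ε)]
  exact ENNReal.tsum_comm

theorem tsum_four_eq_tsum_subcubes {E : Type*} (hj : j - 8 ≤ j') (k : IVec n)
    (F : E → IVec n → E → IVec n → ℝ≥0∞) :
    ∑' (ε' : E) (k' : IVec n) (ε'' : E) (k'' : IVec n), F ε' k' ε'' k'' =
      ∑' (w : IVec n) (w' : IVec n) (ε' : E) (k' : Subcubes n j j' k w) (ε'' : E)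
        (k'' : Subcubes n j j' k w'), F ε' k' ε'' k'' := by
  rw [tsum_congr fun ε' => tsum_congr fun k' => tsum_tsum_eq_tsum_subcubes hj k (F ε' k'),
    tsum_tsum_eq_tsum_subcubes hj k]
  exact tsum_congr fun w => (tsum_congr fun ε' => ENNReal.tsum_comm).trans ENNReal.tsum_comm

theorem tsum_one_subcubes_le (hj : j - 8 ≤ j') (k w : IVec n) :
    ∑' _ : Subcubes n j j' k w, (1 : ℝ≥0∞) ≤
      ENNReal.ofReal (2 ^ ((n : ℝ) * (j' - j + 8))) := by
  set d := (j' - (j - 8)).toNat with hd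
  let q : IVec n := fun i => k i / 256 + w i
  have hsub : {k' | dyadicCube n j' k' ⊆ QW n j k w} ⊆
      ↑(Fintype.piFinset fun i => Finset.Ico (q i * 2 ^ d) (q i * 2 ^ d + 2 ^ d)) := by
    intro k' hk'
    rw [Finset.mem_coe, Fintype.mem_piFinset]
    intro i
    rw [Finset.mem_Ico]
    simp only [q, ← (subset_QW_iff hj).1 hk' i]
    exact ⟨Int.ediv_mul_le _ (by positivity), by
      linarith [Int.lt_ediv_add_one_mul_self (k' i) (by positivity : (0 : ℤ) < 2 ^ d)]⟩
  have hcard : (Fintype.piFinset fun i => Finset.Ico (q i * 2 ^ d) (q i * 2 ^ d + 2 ^ d)).card =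
      (2 ^ d) ^ n := by
    rw [Fintype.card_piFinset]
    simp only [Int.card_Ico, add_sub_cancel_left, Finset.prod_const, Finset.card_univ,
      Fintype.card_fin]
    norm_cast
  have hreal : (((2 ^ d) ^ n : ℕ) : ℝ) = (2 : ℝ) ^ ((n : ℝ) * (j' - j + 8)) := by
    have hd' : (d : ℝ) = j' - j + 8 := by
      rw [hd, ← Int.cast_natCast, Int.toNat_of_nonneg (by omega)]
      push_cast
      ring
    rw [← pow_mul, Nat.cast_pow, Nat.cast_two, ← Real.rpow_natCast, Nat.cast_mul, hd', mul_comm]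
  calc ∑' _ : Subcubes n j j' k w, (1 : ℝ≥0∞)
      = (Set.encard {k' | dyadicCube n j' k' ⊆ QW n j k w} : ℝ≥0∞) := ENNReal.tsum_one
    _ ≤ (Set.encard (Fintype.piFinset fun i =>
          Finset.Ico (q i * 2 ^ d) (q i * 2 ^ d + 2 ^ d) : Set (IVec n)) : ℝ≥0∞) :=
        ENat.toENNReal_le.2 (Set.encard_le_encard hsub)
    _ = ((2 ^ d) ^ n : ℕ) := by rw [Set.encard_coe_eq_coe_finsetCard, hcard]; rfl
    _ = _ := by rw [← ENNReal.ofReal_natCast, hreal]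

end Subcubes

section Estimate

variable {n : ℕ} {j j' : ℤ} {k k' k'' w w' : IVec n}

theorem decay_mul_decay_le_of_subset_QW (hj : j - 8 ≤ j') {N : ℝ} (hN : 0 ≤ N)
    (hk' : dyadicCube n j' k' ⊆ QW n j k w) (hk'' : dyadicCube n j' k'' ⊆ QW n j k w') :
    decay (8 * N) (fun i => (2 : ℝ) ^ (j - j') * k' i - k i) *
        decay (8 * N) (fun i => (k' i : ℝ) - k'' i) ≤
      ENNReal.ofReal ((1 + √n) ^ (12 * N)) *
        (decay N (fun i => (w i : ℝ)) * decay N (fun i => (w i : ℝ) - w' i)) *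
        decay (4 * N) (fun i => (k' i : ℝ) - k'' i) := by
  have hw : decay (8 * N) (fun i => (2 : ℝ) ^ (j - j') * k' i - k i) ≤
      ENNReal.ofReal ((1 + √n) ^ (8 * N)) * decay N (fun i => (w i : ℝ)) :=
    (decay_le_of_le_mul (by linarith) (one_add_enorm2_le_of_subset_QW hk')).trans
      (by gcongr; exact decay_anti (by linarith) _)
  have hww' : decay (4 * N) (fun i => (k' i : ℝ) - k'' i) ≤
      ENNReal.ofReal ((1 + √n) ^ (4 * N)) * decay N (fun i => (w i : ℝ) - w' i) :=
    (decay_le_of_le_mul (by linarith) (one_add_enorm2_sub_le_of_subset_QW hj hk' hk'')).trans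
      (by gcongr; exact decay_anti (by linarith) _)
  calc _ = decay (8 * N) (fun i => (2 : ℝ) ^ (j - j') * k' i - k i) *
        (decay (4 * N) (fun i => (k' i : ℝ) - k'' i) *
          decay (4 * N) (fun i => (k' i : ℝ) - k'' i)) := by
        rw [← decay_add]; ring_nf
    _ ≤ ENNReal.ofReal ((1 + √n) ^ (8 * N)) * decay N (fun i => (w i : ℝ)) *
        (ENNReal.ofReal ((1 + √n) ^ (4 * N)) * decay N (fun i => (w i : ℝ) - w' i) *
          decay (4 * N) (fun i => (k' i : ℝ) - k'' i)) := by gcongr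
    _ = _ := by
        rw [show 12 * N = 8 * N + 4 * N by ring, Real.rpow_add (by positivity),
          ENNReal.ofReal_mul (by positivity)]
        ring

theorem tsum_prod_subcubes_decay_le {E : Type*} [Fintype E] {s : ℝ} {K : ℝ≥0∞}
    (hK : ∀ y : IVec n, ∑' m : IVec n, decay s (fun i => (y i : ℝ) - m i) ≤ K)
    (k w y : IVec n) :
    ∑' b : E × Subcubes n j j' k w, decay s (fun i => (y i : ℝ) - (b.2 : IVec n) i) ≤
      Fintype.card E * K := by
  rw [ENNReal.tsum_fintype_prod_snd fun b : Subcubes n j j' k w =>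
    decay s (fun i => (y i : ℝ) - (b : IVec n) i)]
  gcongr
  exact (ENNReal.tsum_comp_le_tsum_of_injective Subtype.val_injective _).trans (hK y)

theorem tsum_subcubes_kernel_le {E : Type*} [Fintype E] (hj : j - 8 ≤ j') {p s : ℝ}
    (hp : 2 ≤ p) {K : ℝ≥0∞}
    (hK : ∀ y : IVec n, ∑' m : IVec n, decay s (fun i => (y i : ℝ) - m i) ≤ K)
    (u v : E → IVec n → ℝ≥0∞) (k w w' : IVec n) :
    ∑' (ε' : E) (k' : Subcubes n j j' k w) (ε'' : E) (k'' : Subcubes n j j' k w'),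
        u ε' k' * v ε'' k'' * decay s (fun i => ((k' : IVec n) i : ℝ) - (k'' : IVec n) i) ≤
      Fintype.card E * K *
          (Fintype.card E * ENNReal.ofReal (2 ^ ((n : ℝ) * (j' - j + 8)))) ^ (1 - 2 / p) *
        ((∑' (ε' : E) (k' : Subcubes n j j' k w), u ε' k' ^ p) ^ (1 / p) *
          (∑' (ε'' : E) (k'' : Subcubes n j j' k w'), v ε'' k'' ^ p) ^ (1 / p)) := by
  have hcount : ∀ w, ∑' _ : E × Subcubes n j j' k w, (1 : ℝ≥0∞) ≤
      Fintype.card E * ENNReal.ofReal (2 ^ ((n : ℝ) * (j' - j + 8))) := fun w =>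
    (ENNReal.tsum_fintype_prod_snd fun _ : Subcubes n j j' k w => (1 : ℝ≥0∞)).trans_le
      (by gcongr; exact tsum_one_subcubes_le hj k w)
  have hrow : ∀ a : E × Subcubes n j j' k w, ∑' b : E × Subcubes n j j' k w',
      decay s (fun i => ((a.2 : IVec n) i : ℝ) - (b.2 : IVec n) i) ≤ Fintype.card E * K :=
    fun a => tsum_prod_subcubes_decay_le hK k w' a.2
  have hcol : ∀ b : E × Subcubes n j j' k w', ∑' a : E × Subcubes n j j' k w,
      decay s (fun i => ((a.2 : IVec n) i : ℝ) - (b.2 : IVec n) i) ≤ Fintype.card E * K := by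
    intro b
    calc _ = ∑' a : E × Subcubes n j j' k w,
        decay s (fun i => ((b.2 : IVec n) i : ℝ) - (a.2 : IVec n) i) :=
          tsum_congr fun a => decay_sub_comm s _ _
      _ ≤ _ := tsum_prod_subcubes_decay_le hK k w b.2
  simpa only [ENNReal.tsum_prod'] using
    ENNReal.tsum_tsum_mul_le_of_schur_of_card _ hp hrow hcol (hcount w) (hcount w')
      (fun a => u a.1 a.2) (fun b => v b.1 b.2)

theorem tsum_subcubes_pair_le {E : Type*} [Fintype E] (hj : j - 8 ≤ j') {p N : ℝ} (hp : 2 ≤ p)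
    (hN : 0 ≤ N) {K : ℝ≥0∞}
    (hK : ∀ y : IVec n, ∑' m : IVec n, decay (4 * N) (fun i => (y i : ℝ) - m i) ≤ K)
    (u v : E → IVec n → ℝ≥0∞) (k w w' : IVec n) :
    ∑' (ε' : E) (k' : Subcubes n j j' k w) (ε'' : E) (k'' : Subcubes n j j' k w'),
        u ε' k' * v ε'' k'' *
          decay (8 * N) (fun i => (2 : ℝ) ^ (j - j') * ((k' : IVec n) i : ℝ) - k i) *
          decay (8 * N) (fun i => ((k' : IVec n) i : ℝ) - (k'' : IVec n) i) ≤
      ENNReal.ofReal ((1 + √n) ^ (12 * N)) * (Fintype.card E * K) *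
          (Fintype.card E * ENNReal.ofReal (2 ^ ((n : ℝ) * 8))) ^ (1 - 2 / p) *
        (decay N (fun i => (w i : ℝ)) * decay N (fun i => (w i : ℝ) - w' i) *
          ENNReal.ofReal ((2 : ℝ) ^ ((n : ℝ) * ((j' : ℝ) - (j : ℝ)) * (1 - 2 / p))) *
          (∑' (ε' : E) (k' : Subcubes n j j' k w), u ε' k' ^ p) ^ (1 / p) *
          (∑' (ε'' : E) (k'' : Subcubes n j j' k w'), v ε'' k'' ^ p) ^ (1 / p)) := by
  set c := ENNReal.ofReal ((1 + √n) ^ (12 * N)) *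
    (decay N (fun i => (w i : ℝ)) * decay N (fun i => (w i : ℝ) - w' i))
  have hθ : 0 ≤ 1 - 2 / p := by
    rw [sub_nonneg, div_le_one (by linarith)]; exact hp
  have hcard : (Fintype.card E * ENNReal.ofReal (2 ^ ((n : ℝ) * (j' - j + 8)))) ^ (1 - 2 / p) =
      (Fintype.card E * ENNReal.ofReal (2 ^ ((n : ℝ) * 8))) ^ (1 - 2 / p) *
        ENNReal.ofReal ((2 : ℝ) ^ ((n : ℝ) * ((j' : ℝ) - (j : ℝ)) * (1 - 2 / p))) := by
    rw [mul_add, Real.rpow_add two_pos, ENNReal.ofReal_mul (by positivity),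
      mul_comm (ENNReal.ofReal (2 ^ ((n : ℝ) * (j' - j)))), ← mul_assoc,
      ENNReal.mul_rpow_of_nonneg _ _ hθ, ENNReal.ofReal_rpow_of_nonneg (by positivity) hθ,
      ← Real.rpow_mul two_pos.le]
  calc _ ≤ ∑' (ε' : E) (k' : Subcubes n j j' k w) (ε'' : E) (k'' : Subcubes n j j' k w'),
        c * (u ε' k' * v ε'' k'' *
          decay (4 * N) (fun i => ((k' : IVec n) i : ℝ) - (k'' : IVec n) i)) := by
        refine ENNReal.tsum_le_tsum fun ε' => ENNReal.tsum_le_tsum fun k' =>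
          ENNReal.tsum_le_tsum fun ε'' => ENNReal.tsum_le_tsum fun k'' => ?_
        calc _ = u ε' k' * v ε'' k'' *
              (decay (8 * N) (fun i => (2 : ℝ) ^ (j - j') * ((k' : IVec n) i : ℝ) - k i) *
                decay (8 * N) (fun i => ((k' : IVec n) i : ℝ) - (k'' : IVec n) i)) := by ring
          _ ≤ u ε' k' * v ε'' k'' * (c *
                decay (4 * N) (fun i => ((k' : IVec n) i : ℝ) - (k'' : IVec n) i)) :=
              mul_le_mul_right (decay_mul_decay_le_of_subset_QW hj hN k'.2 k''.2) _
          _ = _ := by ring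
    _ = c * ∑' (ε' : E) (k' : Subcubes n j j' k w) (ε'' : E) (k'' : Subcubes n j j' k w'),
        u ε' k' * v ε'' k'' *
          decay (4 * N) (fun i => ((k' : IVec n) i : ℝ) - (k'' : IVec n) i) := by
        simp only [ENNReal.tsum_mul_left]
    _ ≤ _ := by
        grw [tsum_subcubes_kernel_le hj hp hK, hcard]
        exact le_of_eq (by ring)

end Estimate

theorem statement10_general (n : ℕ) (p N : ℝ) (hp1 : 2 ≤ p)
    (hN : (n : ℝ) < N) :
    ∃ C : ℝ, 0 < C ∧ ∀ (j j' : ℤ), j ≤ j' + 1 → ∀ (k : IVec n)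
      (u v : En n → IVec n → ℝ≥0),
      (∑' (ε' : En n) (k' : IVec n) (ε'' : En n) (k'' : IVec n),
          (u ε' k' : ℝ≥0∞) * (v ε'' k'' : ℝ≥0∞) *
            ENNReal.ofReal
              ((1 + enorm2 (fun i => (2:ℝ) ^ (j - j') * (k' i : ℝ) - (k i : ℝ))) ^ (-(8*N))) *
            ENNReal.ofReal
              ((1 + enorm2 (fun i => (k' i : ℝ) - (k'' i : ℝ))) ^ (-(8*N)))) ≤
      ENNReal.ofReal C *
        ∑' (w : IVec n) (w' : IVec n),
          ENNReal.ofReal ((1 + enorm2 (fun i => (w i : ℝ))) ^ (-N)) *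
          ENNReal.ofReal ((1 + enorm2 (fun i => (w i : ℝ) - (w' i : ℝ))) ^ (-N)) *
          ENNReal.ofReal ((2:ℝ) ^ ((n : ℝ) * ((j' : ℝ) - (j : ℝ)) * (1 - 2 / p))) *
          (∑' (ε' : En n) (k' : {k' : IVec n // dyadicCube n j' k' ⊆ QW n j k w}),
              (u ε' (k' : IVec n) : ℝ≥0∞) ^ (p : ℝ)) ^ (1 / p) *
          (∑' (ε'' : En n) (k'' : {k'' : IVec n // dyadicCube n j' k'' ⊆ QW n j k w'}),
              (v ε'' (k'' : IVec n) : ℝ≥0∞) ^ (p : ℝ)) ^ (1 / p) := by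
  have hN0 : 0 ≤ N := by linarith [(Nat.cast_nonneg n : (0 : ℝ) ≤ n)]
  set K := ∑' m : IVec n, decay (4 * N) (fun i => (m i : ℝ))
  have hK : K ≠ ∞ := tsum_decay_ne_top (by linarith)
  set C : ℝ≥0∞ := ENNReal.ofReal ((1 + √n) ^ (12 * N)) * (Fintype.card (En n) * K) *
    (Fintype.card (En n) * ENNReal.ofReal (2 ^ ((n : ℝ) * 8))) ^ (1 - 2 / p)
  have hC : C ≠ ∞ := by
    refine ENNReal.mul_ne_top (ENNReal.mul_ne_top ENNReal.ofReal_ne_top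
      (ENNReal.mul_ne_top (ENNReal.natCast_ne_top _) hK)) (ENNReal.rpow_ne_top_of_nonneg ?_ ?_)
    · rw [sub_nonneg, div_le_one (by linarith)]; exact hp1
    · exact ENNReal.mul_ne_top (ENNReal.natCast_ne_top _) ENNReal.ofReal_ne_top
  refine ⟨C.toReal + 1, by positivity, fun j j' hjj' k u v => ?_⟩
  have hj : j - 8 ≤ j' := by omega
  calc _ = _ := tsum_four_eq_tsum_subcubes hj k _
    _ ≤ ∑' (w : IVec n) (w' : IVec n), C * _ :=
        ENNReal.tsum_le_tsum fun w => ENNReal.tsum_le_tsum fun w' =>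
          tsum_subcubes_pair_le hj hp1 hN0 (fun y => (tsum_decay_sub_eq _ y).le)
            (fun ε k => u ε k) (fun ε k => v ε k) k w w'
    _ ≤ _ := by
        simp only [ENNReal.tsum_mul_left]
        exact mul_le_mul_left
          ((ENNReal.ofReal_toReal hC).symm.le.trans (ENNReal.ofReal_le_ofReal (by linarith))) _

/-- the Cauchy–Schwarz-type estimate for `2 ≤ p < ∞` (`N > n`),
with both sides valued in `[0,∞]`. -/
theorem statement10 (n : ℕ) (hn : 1 ≤ n) (p N : ℝ) (hp1 : 2 ≤ p)
    (hN : (n : ℝ) < N) :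
    ∃ C : ℝ, 0 < C ∧ ∀ (j j' : ℤ), j ≤ j' + 1 → ∀ (k : IVec n)
      (u v : En n → IVec n → ℝ≥0),
      (∑' (ε' : En n) (k' : IVec n) (ε'' : En n) (k'' : IVec n),
          (u ε' k' : ℝ≥0∞) * (v ε'' k'' : ℝ≥0∞) *
            ENNReal.ofReal
              ((1 + enorm2 (fun i => (2:ℝ) ^ (j - j') * (k' i : ℝ) - (k i : ℝ))) ^ (-(8*N))) *
            ENNReal.ofReal
              ((1 + enorm2 (fun i => (k' i : ℝ) - (k'' i : ℝ))) ^ (-(8*N)))) ≤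
      ENNReal.ofReal C *
        ∑' (w : IVec n) (w' : IVec n),
          ENNReal.ofReal ((1 + enorm2 (fun i => (w i : ℝ))) ^ (-N)) *
          ENNReal.ofReal ((1 + enorm2 (fun i => (w i : ℝ) - (w' i : ℝ))) ^ (-N)) *
          ENNReal.ofReal ((2:ℝ) ^ ((n : ℝ) * ((j' : ℝ) - (j : ℝ)) * (1 - 2 / p))) *
          (∑' (ε' : En n) (k' : {k' : IVec n // dyadicCube n j' k' ⊆ QW n j k w}),
              (u ε' (k' : IVec n) : ℝ≥0∞) ^ (p : ℝ)) ^ (1 / p) *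
          (∑' (ε'' : En n) (k'' : {k'' : IVec n // dyadicCube n j' k'' ⊆ QW n j k w'}),
              (v ε'' (k'' : IVec n) : ℝ≥0∞) ^ (p : ℝ)) ^ (1 / p) :=
  statement10_general n p N hp1 hN
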